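/- Let (X,f) be a dynamical system, A ⊆ X a nowhere dense closed subset with f(A) ⊆ A and f(X\A) ⊆ X\A, and ∼ the equivalence relation collapsing A to a point. Then (X,f) is transitive if and only if the quotient system (X/∼, f*) is transitive. -/

import Mathlib

/-- The equivalence relation collapsing `A` to a point. -/
def collapseRel {X : Type*} (A : Set X) (x y : X) : Prop :=
  x = y ∨ (x ∈ A ∧ y ∈ A)

/-- The induced map `f*` on the quotient `X/∼`, `f*([x]) = [f(x)]`. -/
def fstar {X : Type*} (A : Set X) (f : X → X) (hAinv : Set.MapsTo f A A) :
    Quot (collapseRel A) → Quot (collapseRel A) :=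
  Quot.map f (by
    rintro a b (rfl | ⟨ha, hb⟩)
    · exact Or.inl rfl
    · exact Or.inr ⟨hAinv ha, hAinv hb⟩)

/-!
Collapsing `A` is a continuous surjective semiconjugacy `q` from `f` to `f*`, so transitivity
passes to the quotient. Conversely, an open set `W` disjoint from `A` is `q`-saturated with open
image, so `q (f^[n] w) ∈ q '' W` forces `f^[n] w ∈ W`; as `A` is nowhere dense, every nonempty
open set contains a nonempty such `W`, and transitivity lifts back.
-/

def Function.IsTopologicallyTransitive {X : Type*} [TopologicalSpace X] (f : X → X) : Prop :=
  ∀ U V : Set X, IsOpen U → IsOpen V → U.Nonempty → V.Nonempty →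
    ∃ n : ℕ, (f^[n] '' U ∩ V).Nonempty

namespace Function.IsTopologicallyTransitive

variable {X Y : Type*} [TopologicalSpace X] [TopologicalSpace Y] {f : X → X} {g : Y → Y}
  {π : X → Y}

theorem of_semiconj_surjective (hf : IsTopologicallyTransitive f) (hπ : Continuous π)
    (hsurj : Surjective π) (hsc : Semiconj π f g) : IsTopologicallyTransitive g := by
  intro U V hU hV hUne hVne
  obtain ⟨n, _, ⟨x, hxU, rfl⟩, hxV⟩ :=
    hf _ _ (hU.preimage hπ) (hV.preimage hπ) (hUne.preimage hsurj) (hVne.preimage hsurj)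
  exact ⟨n, π (f^[n] x), ⟨π x, hxU, (hsc.iterate_right n x).symm⟩, hxV⟩

theorem of_semiconj (hg : IsTopologicallyTransitive g) (hsc : Semiconj π f g)
    (hsat : ∀ U : Set X, IsOpen U → U.Nonempty →
      ∃ W ⊆ U, W.Nonempty ∧ IsOpen (π '' W) ∧ π ⁻¹' (π '' W) ⊆ W) :
    IsTopologicallyTransitive f := by
  intro U V hU hV hUne hVne
  obtain ⟨U', hU'U, hU'ne, hU'open, -⟩ := hsat U hU hUne
  obtain ⟨V', hV'V, hV'ne, hV'open, hV'sat⟩ := hsat V hV hVne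
  obtain ⟨n, _, ⟨_, ⟨u, huU', rfl⟩, rfl⟩, hgu⟩ :=
    hg _ _ hU'open hV'open (hU'ne.image π) (hV'ne.image π)
  have hfu : f^[n] u ∈ V' := hV'sat (by rwa [Set.mem_preimage, hsc.iterate_right n u])
  exact ⟨n, f^[n] u, ⟨u, hU'U huU', rfl⟩, hV'V hfu⟩

end Function.IsTopologicallyTransitive

section Collapse

variable {X : Type*} {A : Set X}

theorem collapseRel_equivalence : Equivalence (collapseRel A) where
  refl _ := Or.inl rfl
  symm := by
    rintro _ _ (rfl | ⟨hx, hy⟩)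
    exacts [Or.inl rfl, Or.inr ⟨hy, hx⟩]
  trans := by
    rintro _ _ _ (rfl | ⟨hx, hy⟩) hyz
    · exact hyz
    rcases hyz with rfl | ⟨-, hz⟩
    exacts [Or.inr ⟨hx, hy⟩, Or.inr ⟨hx, hz⟩]

theorem preimage_image_quot_mk_collapseRel {W : Set X} (hW : Disjoint W A) :
    Quot.mk (collapseRel A) ⁻¹' (Quot.mk (collapseRel A) '' W) = W := by
  refine Set.Subset.antisymm ?_ (Set.subset_preimage_image _ _)
  rintro x ⟨w, hw, hwx⟩
  rcases (collapseRel_equivalence.quot_mk_eq_iff w x).1 hwx with rfl | ⟨hwA, -⟩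
  exacts [hw, absurd hwA (hW.notMem_of_mem_left hw)]

theorem isOpen_image_quot_mk_collapseRel [TopologicalSpace X] {W : Set X} (hWo : IsOpen W)
    (hW : Disjoint W A) : IsOpen (Quot.mk (collapseRel A) '' W) := by
  rw [isOpen_coinduced, preimage_image_quot_mk_collapseRel hW]
  exact hWo

theorem semiconj_quot_mk_fstar (f : X → X) (hAinv : Set.MapsTo f A A) :
    Function.Semiconj (Quot.mk (collapseRel A)) f (fstar A f hAinv) :=
  fun _ => rfl

end Collapse

theorem transitive_iff_quotient_transitive_general
    {X : Type*} [MetricSpace X]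
    (f : X → X)
    (A : Set X) (hAnwd : interior (closure A) = ∅)
    (hAinv : Set.MapsTo f A A) :
    (∀ U V : Set X, IsOpen U → IsOpen V → U.Nonempty → V.Nonempty →
        ∃ n : ℕ, (f^[n] '' U ∩ V).Nonempty) ↔
    (∀ U V : Set (Quot (collapseRel A)), IsOpen U → IsOpen V →
        U.Nonempty → V.Nonempty →
        ∃ n : ℕ, ((fstar A f hAinv)^[n] '' U ∩ V).Nonempty) := by
  show Function.IsTopologicallyTransitive f ↔ Function.IsTopologicallyTransitive (fstar A f hAinv)
  have hsc := semiconj_quot_mk_fstar f hAinv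
  have hdense : Dense (closure A)ᶜ := interior_eq_empty_iff_dense_compl.1 hAnwd
  have hdisj (U : Set X) : Disjoint (U \ closure A) A :=
    Set.disjoint_sdiff_left.mono_right subset_closure
  refine ⟨fun h => h.of_semiconj_surjective continuous_quot_mk Quot.mk_surjective hsc,
    fun h => h.of_semiconj hsc fun U hU hUne => ?_⟩
  exact ⟨U \ closure A, Set.sdiff_subset, hdense.inter_open_nonempty U hU hUne,
    isOpen_image_quot_mk_collapseRel (hU.sdiff isClosed_closure) (hdisj U),
    (preimage_image_quot_mk_collapseRel (hdisj U)).subset⟩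

/-- For a nowhere dense closed invariant `A` (with invariant complement), `(X,f)` is
transitive iff the quotient system `(X/∼, f*)` is transitive. -/
theorem transitive_iff_quotient_transitive
    {X : Type*} [MetricSpace X] [CompactSpace X]
    (f : X → X) (hf : Continuous f)
    (A : Set X) (hA : IsClosed A) (hAnwd : interior (closure A) = ∅)
    (hAinv : Set.MapsTo f A A) (hAcinv : Set.MapsTo f Aᶜ Aᶜ) :
    (∀ U V : Set X, IsOpen U → IsOpen V → U.Nonempty → V.Nonempty →
        ∃ n : ℕ, (f^[n] '' U ∩ V).Nonempty) ↔
    (∀ U V : Set (Quot (collapseRel A)), IsOpen U → IsOpen V →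
        U.Nonempty → V.Nonempty →
        ∃ n : ℕ, ((fstar A f hAinv)^[n] '' U ∩ V).Nonempty) :=
  transitive_iff_quotient_transitive_general f A hAnwd hAinv
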